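/- Let |ψ^{AB}⟩ = Σ_i √ω_i |i⟩|β_i⟩ and let {$_k} be a family of CP maps $_k(X) = Σ_n F^k_n X (F^k_n)† on B with Σ_k Σ_n (F^k_n)† F^k_n = I. Then the average created coherence satisfies C̄^{A|B}(|ψ⟩) := Σ_k p_k C_{l1}(tr_B[(I⊗$_k)|ψ⟩⟨ψ|]/p_k) ≤ E(|ψ⟩) · Σ_k √(Σ_{j<i} |N^k_{ji}|²), where N^k = Σ_n (F^k_n)† F^k_n, N^k_{ji} = ⟨β_j|N^k|β_i⟩, p_k = tr[(I⊗$_k)|ψ⟩⟨ψ|], and E is the concurrence. -/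

import Mathlib

open Matrix Kronecker BigOperators Finset ComplexOrder

/-!
The `(i, j)` entry of the unnormalised post-operation state of `A` for the `k`-th map is
`√(ω i ω j) N^k_{ji}`, so the weight `p_k` cancels against the normalisation and the `k`-th term
is the `l1`-coherence of that matrix. Since `N^k` is Hermitian, the off-diagonal sum is twice
the sum over `j < i`, and Cauchy–Schwarz bounds it by `2 √(Σ_{j<i} ω i ω j) √(Σ_{j<i} |N^k_{ji}|²)`,
where `2 √(Σ_{j<i} ω i ω j)` is exactly the concurrence `E`. Summing over `k` gives the claim.
-/

noncomputable def l1Coh {d : ℕ} (ρ : Matrix (Fin d) (Fin d) ℂ) : ℝ :=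
  ∑ i, ∑ j, if i ≠ j then ‖ρ i j‖ else 0

noncomputable def ptraceB {dA dB : ℕ}
    (ρ : Matrix (Fin dA × Fin dB) (Fin dA × Fin dB) ℂ) : Matrix (Fin dA) (Fin dA) ℂ :=
  fun i k => ∑ j, ρ (i, j) (k, j)

/-- Unnormalized post-operation reduced state of A for the CP map with Kraus operators `F k n`
(`k` fixed), applied to `|χ⟩⟨χ|`. -/
noncomputable def postAfam {dA dB : ℕ} {ι : Type*} [Fintype ι]
    (F : ι → Matrix (Fin dB) (Fin dB) ℂ) (χ : Fin dA × Fin dB → ℂ) :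
    Matrix (Fin dA) (Fin dA) ℂ :=
  ptraceB (∑ n, ((1 : Matrix (Fin dA) (Fin dA) ℂ) ⊗ₖ F n) * Matrix.vecMulVec χ (star χ) *
    ((1 : Matrix (Fin dA) (Fin dA) ℂ) ⊗ₖ F n)ᴴ)

lemma l1Coh_smul {d : ℕ} (c : ℂ) (ρ : Matrix (Fin d) (Fin d) ℂ) :
    l1Coh (c • ρ) = ‖c‖ * l1Coh ρ := by
  simp only [l1Coh, Finset.mul_sum, Matrix.smul_apply, smul_eq_mul, norm_mul, mul_ite, mul_zero]

lemma mul_l1Coh_inv_smul {d : ℕ} {p : ℝ} (hp : 0 < p) (ρ : Matrix (Fin d) (Fin d) ℂ) :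
    p * l1Coh ((p : ℂ)⁻¹ • ρ) = l1Coh ρ := by
  rw [l1Coh_smul, norm_inv, Complex.norm_real, Real.norm_of_nonneg hp.le,
    mul_inv_cancel_left₀ hp.ne']

lemma star_mulVec_dotProduct_mulVec {m n : Type*} [Fintype m] [Fintype n]
    (A : Matrix m n ℂ) (v w : n → ℂ) :
    star (A *ᵥ v) ⬝ᵥ (A *ᵥ w) = star v ⬝ᵥ (Aᴴ * A) *ᵥ w := by
  rw [star_mulVec, dotProduct_mulVec, vecMul_vecMul, ← dotProduct_mulVec]

lemma postAfam_apply {dA dB : ℕ} {ι : Type*} [Fintype ι]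
    (F : ι → Matrix (Fin dB) (Fin dB) ℂ) (χ : Fin dA × Fin dB → ℂ) (i i' : Fin dA) :
    postAfam F χ i i' =
      star (fun b => χ (i', b)) ⬝ᵥ (∑ n, (F n)ᴴ * F n) *ᵥ fun a => χ (i, a) := by
  have hKraus : postAfam F χ i i' =
      ∑ n, star (F n *ᵥ fun b => χ (i', b)) ⬝ᵥ (F n *ᵥ fun a => χ (i, a)) := by
    simp only [postAfam, ptraceB, Matrix.sum_apply, Matrix.mul_apply, Matrix.vecMulVec_apply,
      Matrix.kroneckerMap_apply, Matrix.one_apply, Matrix.conjTranspose_apply,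
      Fintype.sum_prod_type, ite_mul, one_mul, zero_mul, apply_ite (star : ℂ → ℂ), star_zero,
      mul_ite, mul_zero, Finset.sum_ite_irrel, Finset.sum_const_zero, Finset.sum_ite_eq,
      Finset.mem_univ, if_true, Pi.star_apply, dotProduct, mulVec, star_sum, star_mul',
      Finset.sum_mul, Finset.mul_sum]
    rw [Finset.sum_comm]
    refine Finset.sum_congr rfl fun n _ => Finset.sum_congr rfl fun j _ => ?_
    rw [Finset.sum_comm]
    refine Finset.sum_congr rfl fun b _ => Finset.sum_congr rfl fun a _ => ?_
    ring
  simp only [hKraus, star_mulVec_dotProduct_mulVec, sum_mulVec, dotProduct_sum]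

lemma postAfam_apply_of_schmidt {dA dB : ℕ} {ι : Type*} [Fintype ι]
    (F : ι → Matrix (Fin dB) (Fin dB) ℂ) {ω : Fin dA → ℝ} {β : Fin dA → Fin dB → ℂ}
    {ψ : Fin dA × Fin dB → ℂ} (hψ : ∀ i j, ψ (i, j) = (√(ω i) : ℂ) * β i j) (i j : Fin dA) :
    postAfam F ψ i j =
      (√(ω i) * √(ω j) : ℝ) * (star (β j) ⬝ᵥ (∑ n, (F n)ᴴ * F n) *ᵥ β i) := by
  have hrow : ∀ i, (fun a => ψ (i, a)) = (√(ω i) : ℂ) • β i := fun i => by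
    ext a
    simp [hψ]
  rw [postAfam_apply, hrow, hrow, star_smul, mulVec_smul, smul_dotProduct, dotProduct_smul]
  simp only [smul_eq_mul, Complex.star_def, Complex.conj_ofReal, Complex.ofReal_mul]
  ring

lemma Matrix.IsHermitian.star_dotProduct_mulVec {n : Type*} [Fintype n] {M : Matrix n n ℂ}
    (hM : M.IsHermitian) (x y : n → ℂ) :
    star (star x ⬝ᵥ M *ᵥ y) = star y ⬝ᵥ M *ᵥ x := by
  conv_rhs => rw [star_dotProduct, star_mulVec, ← dotProduct_mulVec, hM.eq]

lemma sum_star_mul_mul_eq_star_dotProduct_mulVec {n : Type*} [Fintype n] (x y : n → ℂ)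
    (M : Matrix n n ℂ) :
    ∑ l, ∑ m, star (x l) * M l m * y m = star x ⬝ᵥ M *ᵥ y := by
  simp only [dotProduct, mulVec, Pi.star_apply, Finset.mul_sum, mul_assoc]

lemma sum_ne_eq_two_mul_sum_lt {α : Type*} [Fintype α] [LinearOrder α] (f : α → α → ℝ)
    (hf : ∀ i j, f i j = f j i) :
    ∑ i, ∑ j, (if i ≠ j then f i j else 0) = 2 * ∑ i, ∑ j, (if j < i then f i j else 0) := by
  have hsplit : ∀ i j, (if i ≠ j then f i j else 0)
      = (if j < i then f i j else 0) + (if i < j then f i j else 0) := by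
    intro i j
    rcases lt_trichotomy i j with h | rfl | h
    · simp [h, h.ne, h.not_gt]
    · simp
    · simp [h, h.ne', h.not_gt]
  have hswap : ∑ i, ∑ j, (if i < j then f i j else 0)
      = ∑ i, ∑ j, (if j < i then f i j else 0) := by
    rw [Finset.sum_comm]
    simp only [hf]
  simp only [hsplit, Finset.sum_add_distrib, hswap]
  ring

lemma sum_lt_mul_le_sqrt_mul_sqrt {α : Type*} [Fintype α] [LinearOrder α] (f g : α → α → ℝ) :
    ∑ i, ∑ j, (if j < i then f i j * g i j else 0)
      ≤ √(∑ i, ∑ j, if j < i then f i j ^ 2 else 0) *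
        √(∑ i, ∑ j, if j < i then g i j ^ 2 else 0) := by
  have h := Real.sum_mul_le_sqrt_mul_sqrt Finset.univ
    (fun p : α × α => if p.2 < p.1 then f p.1 p.2 else 0)
    (fun p : α × α => if p.2 < p.1 then g p.1 p.2 else 0)
  simpa only [Fintype.sum_prod_type, ite_pow, ite_mul_ite, mul_zero, ne_eq,
    OfNat.ofNat_ne_zero, not_false_eq_true, zero_pow] using h

lemma l1Coh_le_of_apply_eq {d : ℕ} {ω : Fin d → ℝ} (hω : ∀ i, 0 ≤ ω i)
    {M : Fin d → Fin d → ℂ} (hM : ∀ i j, ‖M i j‖ = ‖M j i‖) {ρ : Matrix (Fin d) (Fin d) ℂ}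
    (hρ : ∀ i j, ρ i j = (√(ω i) * √(ω j) : ℝ) * M j i) :
    l1Coh ρ ≤ √(2 * ∑ i, ∑ j, if i ≠ j then ω i * ω j else 0) *
      √(∑ i, ∑ j, if j < i then ‖M j i‖ ^ 2 else 0) := by
  have hnorm : ∀ i j, ‖ρ i j‖ = √(ω i * ω j) * ‖M j i‖ := fun i j => by
    rw [hρ, norm_mul, Complex.norm_real, Real.norm_of_nonneg (by positivity),
      Real.sqrt_mul (hω i)]
  calc l1Coh ρ = 2 * ∑ i, ∑ j, if j < i then √(ω i * ω j) * ‖M j i‖ else 0 := by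
        simp only [l1Coh, hnorm]
        exact sum_ne_eq_two_mul_sum_lt _ fun i j => by rw [mul_comm (ω i), hM]
    _ ≤ 2 * (√(∑ i, ∑ j, if j < i then √(ω i * ω j) ^ 2 else 0) *
          √(∑ i, ∑ j, if j < i then ‖M j i‖ ^ 2 else 0)) := by
        gcongr
        exact sum_lt_mul_le_sqrt_mul_sqrt _ _
    _ = _ := by
        have hsq : ∀ i j, √(ω i * ω j) ^ 2 = ω i * ω j := fun i j =>
          Real.sq_sqrt (mul_nonneg (hω i) (hω j))
        have hsqrt4 : ∀ x : ℝ, √(2 * (2 * x)) = 2 * √x := fun x => by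
          rw [← mul_assoc, Real.sqrt_mul (by norm_num), show (2 * 2 : ℝ) = 2 ^ 2 by norm_num,
            Real.sqrt_sq zero_le_two]
        rw [sum_ne_eq_two_mul_sum_lt _ fun i j => mul_comm _ _, hsqrt4]
        simp only [hsq, mul_assoc]

theorem avg_RCC_tighter_bound_general
    {d dB : ℕ} {κ ι : Type*} [Fintype κ] [Fintype ι]
    (ω : Fin d → ℝ) (hω : ∀ i, 0 ≤ ω i)
    (β : Fin d → Fin dB → ℂ)
    (ψ : Fin d × Fin dB → ℂ)
    (hψ : ∀ i j, ψ (i, j) = (Real.sqrt (ω i) : ℂ) * β i j)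
    (F : κ → ι → Matrix (Fin dB) (Fin dB) ℂ)
    (N : κ → Matrix (Fin dB) (Fin dB) ℂ)
    (hN : ∀ k, N k = ∑ n, (F k n)ᴴ * (F k n))
    (Nmat : κ → Fin d → Fin d → ℂ)
    (hNmat : ∀ k j i, Nmat k j i = ∑ l, ∑ m, (starRingEnd ℂ) (β j l) * (N k) l m * β i m)
    (E : ℝ) (hE : E = Real.sqrt (2 * ∑ i, ∑ j, if i ≠ j then ω i * ω j else 0)) :
    (∑ k, if 0 < ((postAfam (F k) ψ).trace).re then
        ((postAfam (F k) ψ).trace).re *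
          l1Coh (((((postAfam (F k) ψ).trace).re : ℂ))⁻¹ • postAfam (F k) ψ)
      else 0)
      ≤ E * ∑ k, Real.sqrt (∑ i, ∑ j,
          if j < i then ‖Nmat k j i‖ ^ 2 else 0) := by
  have hNmat' : ∀ k j i, Nmat k j i = star (β j) ⬝ᵥ N k *ᵥ β i := fun k j i => by
    rw [hNmat, ← sum_star_mul_mul_eq_star_dotProduct_mulVec]; rfl
  have hNherm : ∀ k, (N k).IsHermitian := fun k => by
    rw [hN]
    exact isSelfAdjoint_sum _ fun n _ => isHermitian_conjTranspose_mul_self _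
  have hpost : ∀ k i j, postAfam (F k) ψ i j = (√(ω i) * √(ω j) : ℝ) * Nmat k j i :=
    fun k i j => by rw [postAfam_apply_of_schmidt _ hψ, ← hN, hNmat']
  have hNsymm : ∀ k i j, ‖Nmat k i j‖ = ‖Nmat k j i‖ := fun k i j => by
    rw [hNmat', hNmat', ← (hNherm k).star_dotProduct_mulVec, norm_star]
  rw [Finset.mul_sum]
  refine Finset.sum_le_sum fun k _ => ?_
  split_ifs with hp
  · rw [mul_l1Coh_inv_smul hp, hE]
    exact l1Coh_le_of_apply_eq hω (hNsymm k) (hpost k)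
  · exact mul_nonneg (hE ▸ Real.sqrt_nonneg _) (Real.sqrt_nonneg _)

/-- Tighter average bound (Remark, Eq. (bound3)):
`C̄^{A|B}(ψ) ≤ E(ψ) Σ_k √(Σ_{j<i}|N^k_{ji}|²)` for a family of CP maps `$_k`
with `Σ_k Σ_n (F^k_n)†F^k_n = I`. -/
theorem avg_RCC_tighter_bound
    {d dB : ℕ} {κ ι : Type*} [Fintype κ] [Fintype ι]
    (ω : Fin d → ℝ) (hω : ∀ i, 0 ≤ ω i) (hωsum : ∑ i, ω i = 1)
    (β : Fin d → Fin dB → ℂ)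
    (hβ : ∀ i k, ∑ j, (starRingEnd ℂ) (β i j) * β k j = if i = k then 1 else 0)
    (ψ : Fin d × Fin dB → ℂ)
    (hψ : ∀ i j, ψ (i, j) = (Real.sqrt (ω i) : ℂ) * β i j)
    (F : κ → ι → Matrix (Fin dB) (Fin dB) ℂ)
    (htp : ∑ k, ∑ n, (F k n)ᴴ * (F k n) = (1 : Matrix (Fin dB) (Fin dB) ℂ))
    (N : κ → Matrix (Fin dB) (Fin dB) ℂ)
    (hN : ∀ k, N k = ∑ n, (F k n)ᴴ * (F k n))
    (Nmat : κ → Fin d → Fin d → ℂ)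
    (hNmat : ∀ k j i, Nmat k j i = ∑ l, ∑ m, (starRingEnd ℂ) (β j l) * (N k) l m * β i m)
    (E : ℝ) (hE : E = Real.sqrt (2 * ∑ i, ∑ j, if i ≠ j then ω i * ω j else 0)) :
    (∑ k, if 0 < ((postAfam (F k) ψ).trace).re then
        ((postAfam (F k) ψ).trace).re *
          l1Coh (((((postAfam (F k) ψ).trace).re : ℂ))⁻¹ • postAfam (F k) ψ)
      else 0)
      ≤ E * ∑ k, Real.sqrt (∑ i, ∑ j,
          if j < i then ‖Nmat k j i‖ ^ 2 else 0) :=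
  avg_RCC_tighter_bound_general ω hω β ψ hψ F N hN Nmat hNmat E hE
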